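/- With finite X, binary Y, posterior η, transformation f : X → X̃, pushforward posterior η_f, and any g : X̃ → ℝ: R*_{f(X)} − R*_X ≤ 2·√(L_{g,X}(f)), where L_{g,X}(f) = E_X[(g(f(X)) − η(X))²]. -/

import Mathlib

open Finset

/-- Feature marginal of a joint pmf on `X × {0,1}`. -/
noncomputable def marg {X : Type*} (p : X → Bool → ℝ) (x : X) : ℝ := p x false + p x true

/-- Conditional probability `p(y|x)`, with the convention that it is `0`
when the feature marginal vanishes. -/
noncomputable def condP {X : Type*} (p : X → Bool → ℝ) (x : X) (y : Bool) : ℝ :=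
  if marg p x = 0 then 0 else p x y / marg p x

/-- Bayes error `R*_X = ∑_x p(x) (1 - max_y p(y|x))`. -/
noncomputable def bayesError {X : Type*} [Fintype X] (p : X → Bool → ℝ) : ℝ :=
  ∑ x, marg p x * (1 - max (condP p x false) (condP p x true))

/-- Pushforward joint pmf under a deterministic map on the feature coordinate. -/
noncomputable def pushforward {X X' : Type*} [Fintype X] [DecidableEq X']
    (f : X → X') (p : X → Bool → ℝ) (x' : X') (y : Bool) : ℝ :=
  ∑ x ∈ Finset.univ.filter (fun x => f x = x'), p x y

/-! The Bayes error is `E[min(η, 1 - η)]` and `t ↦ min(t, 1 - t)` is 1-Lipschitz, so coarsening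
the features by `f` costs at most `E|η - η_f ∘ f|`. Passing through `g ∘ f` splits this into two
`L¹` distances, each bounded by an `L²` distance (Cauchy–Schwarz): the first is `√L_{g,X}(f)`, and
the second is `√L_{g,f(X)}(id) ≤ √L_{g,X}(f)`, because on each fibre of `f` the posterior `η_f` is
the `p`-weighted mean of `η`, which minimises the weighted square loss among constants. -/

section WeightedCauchySchwarz

variable {ι : Type*} (s : Finset ι) {w a : ι → ℝ}

lemma sum_mul_abs_le_sqrt_sum_mul_sq (hw : ∀ i ∈ s, 0 ≤ w i) (hw1 : ∑ i ∈ s, w i ≤ 1) :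
    ∑ i ∈ s, w i * |a i| ≤ √(∑ i ∈ s, w i * a i ^ 2) := by
  refine Real.le_sqrt_of_sq_le ?_
  calc (∑ i ∈ s, w i * |a i|) ^ 2 ≤ (∑ i ∈ s, w i) * ∑ i ∈ s, w i * a i ^ 2 :=
        sum_sq_le_sum_mul_sum_of_sq_le_mul s hw
          (fun i hi => mul_nonneg (hw i hi) (sq_nonneg _))
          (fun i _ => by rw [mul_pow, sq_abs]; exact (by ring : _ = _).le)
    _ ≤ ∑ i ∈ s, w i * a i ^ 2 :=
        mul_le_of_le_one_left (sum_nonneg fun i hi => mul_nonneg (hw i hi) (sq_nonneg _)) hw1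

/-- The weighted mean minimises the weighted square loss among constants (stated for the
constant `0`; translate `a` for the others). -/
lemma sum_mul_sq_mean_le_sum_mul_sq (hw : ∀ i ∈ s, 0 ≤ w i) {m : ℝ}
    (hm : (∑ i ∈ s, w i) * m = ∑ i ∈ s, w i * a i) :
    (∑ i ∈ s, w i) * m ^ 2 ≤ ∑ i ∈ s, w i * a i ^ 2 := by
  rcases (sum_nonneg hw).eq_or_lt with hzero | hpos
  · rw [← hzero, zero_mul]
    exact sum_nonneg fun i hi => mul_nonneg (hw i hi) (sq_nonneg _)
  refine le_of_mul_le_mul_left ?_ hpos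
  calc (∑ i ∈ s, w i) * ((∑ i ∈ s, w i) * m ^ 2) = (∑ i ∈ s, w i * a i) ^ 2 := by
        rw [← hm]; ring
    _ ≤ (∑ i ∈ s, w i) * ∑ i ∈ s, w i * a i ^ 2 :=
        sum_sq_le_sum_mul_sum_of_sq_le_mul s hw
          (fun i hi => mul_nonneg (hw i hi) (sq_nonneg _)) (fun i _ => (by ring : _ = _).le)

end WeightedCauchySchwarz

lemma abs_min_one_sub_sub_min_one_sub_le (a b : ℝ) :
    |min a (1 - a) - min b (1 - b)| ≤ |a - b| := by
  simpa [abs_sub_comm (1 - a), sub_sub_sub_cancel_left, abs_sub_comm b a] using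
    abs_min_sub_min_le_max a (1 - a) b (1 - b)

/-- The square loss `L_{h,X}(id) = E[(h(X) - η(X))²]`; the paper's `L_{g,X}(f)` is
`sqLoss p (g ∘ f)`. -/
noncomputable def sqLoss {X : Type*} [Fintype X] (p : X → Bool → ℝ) (h : X → ℝ) : ℝ :=
  ∑ x, marg p x * (h x - condP p x true) ^ 2

section BinaryPmf

variable {X : Type*} {p : X → Bool → ℝ}

lemma marg_nonneg (hp : ∀ x y, 0 ≤ p x y) (x : X) : 0 ≤ marg p x :=
  add_nonneg (hp x false) (hp x true)

lemma marg_mul_condP (hp : ∀ x y, 0 ≤ p x y) (x : X) (y : Bool) :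
    marg p x * condP p x y = p x y := by
  by_cases h : marg p x = 0
  · have : p x y = 0 := by
      cases y <;> linarith [hp x false, hp x true, show p x false + p x true = 0 from h]
    simp [condP, h, this]
  · rw [condP, if_neg h, mul_div_cancel₀ _ h]

lemma condP_false_eq_one_sub_condP_true {x : X} (h : marg p x ≠ 0) :
    condP p x false = 1 - condP p x true := by
  rw [condP, condP, if_neg h, if_neg h, eq_sub_iff_add_eq, ← add_div, div_eq_one_iff_eq h, marg]

lemma bayesError_eq_sum_marg_mul_min [Fintype X] :
    bayesError p = ∑ x, marg p x * min (condP p x true) (1 - condP p x true) := by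
  refine sum_congr rfl fun x _ => ?_
  by_cases h : marg p x = 0
  · simp [h]
  · rw [condP_false_eq_one_sub_condP_true h, ← min_sub_sub_left, sub_sub_cancel, min_comm]

end BinaryPmf

section Pushforward

variable {X X' : Type*} [Fintype X] [DecidableEq X'] {p : X → Bool → ℝ}

lemma pushforward_nonneg (hp : ∀ x y, 0 ≤ p x y) (f : X → X') (x' : X') (y : Bool) :
    0 ≤ pushforward f p x' y :=
  sum_nonneg fun x _ => hp x y

lemma marg_pushforward (f : X → X') (x' : X') :
    marg (pushforward f p) x' = ∑ x with f x = x', marg p x :=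
  sum_add_distrib.symm

lemma marg_pushforward_mul_condP (hp : ∀ x y, 0 ≤ p x y) (f : X → X') (x' : X') :
    marg (pushforward f p) x' * condP (pushforward f p) x' true =
      ∑ x with f x = x', marg p x * condP p x true := by
  rw [marg_mul_condP (pushforward_nonneg hp f), pushforward]
  exact sum_congr rfl fun x _ => (marg_mul_condP hp x true).symm

variable [Fintype X']

lemma sum_marg_pushforward_mul (f : X → X') (φ : X' → ℝ) :
    ∑ x', marg (pushforward f p) x' * φ x' = ∑ x, marg p x * φ (f x) := by
  rw [← sum_fiberwise univ f]
  refine sum_congr rfl fun x' _ => ?_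
  rw [marg_pushforward, sum_mul]
  exact sum_congr rfl fun x hx => by rw [(mem_filter.1 hx).2]

lemma bayesError_pushforward_sub_le (hp : ∀ x y, 0 ≤ p x y) (f : X → X') :
    bayesError (pushforward f p) - bayesError p ≤
      ∑ x, marg p x * |condP p x true - condP (pushforward f p) (f x) true| := by
  rw [bayesError_eq_sum_marg_mul_min, bayesError_eq_sum_marg_mul_min,
    sum_marg_pushforward_mul f (fun x' => min (condP _ x' true) (1 - condP _ x' true)),
    ← sum_sub_distrib]
  refine sum_le_sum fun x _ => ?_
  rw [← mul_sub]
  exact mul_le_mul_of_nonneg_left ((le_abs_self _).trans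
    (by rw [abs_sub_comm (condP p x true)]; exact abs_min_one_sub_sub_min_one_sub_le _ _))
    (marg_nonneg hp x)

lemma sqLoss_pushforward_le (hp : ∀ x y, 0 ≤ p x y) (f : X → X') (g : X' → ℝ) :
    sqLoss (pushforward f p) g ≤ sqLoss p (g ∘ f) := by
  rw [sqLoss, sqLoss, ← sum_fiberwise univ f]
  refine sum_le_sum fun x' _ => ?_
  have hfibre : ∀ x ∈ univ.filter (f · = x'),
      marg p x * ((g ∘ f) x - condP p x true) ^ 2 = marg p x * (g x' - condP p x true) ^ 2 :=
    fun x hx => by rw [Function.comp_apply, (mem_filter.1 hx).2]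
  rw [sum_congr rfl hfibre, marg_pushforward]
  refine sum_mul_sq_mean_le_sum_mul_sq _ (fun x _ => marg_nonneg hp x) ?_
  simp_rw [mul_sub, sum_sub_distrib, ← marg_pushforward_mul_condP hp, ← sum_mul,
    marg_pushforward]

end Pushforward

/-- The increase in Bayes error under `f` is at most `2 √(L_{g,X}(f))`. -/
theorem bayesError_increase_le_sqrt_loss {X X' : Type*} [Fintype X] [Fintype X']
    [DecidableEq X'] (p : X → Bool → ℝ) (hp : ∀ x y, 0 ≤ p x y)
    (hsum : ∑ x, ∑ y, p x y = 1) (f : X → X') (g : X' → ℝ) :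
    bayesError (pushforward f p) - bayesError p ≤
      2 * Real.sqrt (∑ x, marg p x * (g (f x) - condP p x true) ^ 2) := by
  set q := pushforward f p
  have hμ : ∀ x ∈ univ, 0 ≤ marg p x := fun x _ => marg_nonneg hp x
  have hmass : ∑ x, marg p x ≤ 1 := by
    simp only [marg, ← hsum, Fintype.sum_bool, add_comm, le_refl]
  have hcontract : √(sqLoss q g) ≤ √(sqLoss p (g ∘ f)) :=
    Real.sqrt_le_sqrt (sqLoss_pushforward_le hp f g)
  calc bayesError q - bayesError p
      ≤ ∑ x, marg p x * |condP p x true - condP q (f x) true| := bayesError_pushforward_sub_le hp f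
    _ ≤ ∑ x, marg p x * |g (f x) - condP p x true| +
          ∑ x, marg p x * |g (f x) - condP q (f x) true| := by
        rw [← sum_add_distrib]
        refine sum_le_sum fun x hx => ?_
        rw [← mul_add, abs_sub_comm (g (f x))]
        exact mul_le_mul_of_nonneg_left (abs_sub_le _ _ _) (hμ x hx)
    _ ≤ √(sqLoss p (g ∘ f)) + √(sqLoss q g) := by
        rw [sqLoss, sqLoss, sum_marg_pushforward_mul f (fun x' => (g x' - condP q x' true) ^ 2)]
        exact add_le_add (sum_mul_abs_le_sqrt_sum_mul_sq _ hμ hmass)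
          (sum_mul_abs_le_sqrt_sum_mul_sq _ hμ hmass)
    _ ≤ 2 * √(sqLoss p (g ∘ f)) := by linarith
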